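/- arXiv:1305.1659 — 2 statements merged into one kernel-verified Lean document; each statement's English description precedes it below -/
import Mathlib

section
/- The matrix h₁ := h₀⁻¹·h∞⁻¹ is given explicitly by: (h₁)_{1,1} = (−1)^r B_Q; (h₁)_{i,1} = (−1)^r (B_{Q−i+1} − A_{Q−i+1}) for 2 ≤ i ≤ Q; and (h₁)_{i,j} = δ_{ij} (Kronecker delta) for all i and all j with 2 ≤ j ≤ Q. -/
/-!
`h∞ = compMat Q A` is a companion matrix, so its inverse is again a shifted matrix whose first
column is `-(A Q)⁻¹ (A_{Q-1}, …, A_1, 1)ᵀ`; only the unit `A Q` enters, and evaluating the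
product `∏ (T^{d_k} - 1)` at `0` gives `A Q = (-1)^r`. Multiplying `compMat Q B` by this inverse
is a direct computation: every column but the first is a shifted unit vector.
-/

open Polynomial Matrix

def compMat (Q : ℕ) (A : ℕ → ℤ) : Matrix (Fin Q) (Fin Q) ℤ :=
  Matrix.of fun i j =>
    if (j : ℕ) + 1 = Q then -A (Q - (i : ℕ))
    else if (i : ℕ) = (j : ℕ) + 1 then 1 else 0

theorem eval_zero_prod_X_pow_sub_one {R ι : Type*} [CommRing R] [Fintype ι] (d : ι → ℕ)
    (hd : ∀ k, 0 < d k) : (∏ k, (X ^ d k - 1 : R[X])).eval 0 = (-1) ^ Fintype.card ι := by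
  simp [eval_prod, zero_pow (hd _).ne']

theorem eval_zero_X_pow_add_sum {R : Type*} [CommSemiring R] {Q : ℕ} (hQ : 0 < Q)
    (A : ℕ → R) : (X ^ Q + ∑ i ∈ Finset.Icc 1 Q, C (A i) * X ^ (Q - i)).eval 0 = A Q := by
  rw [eval_add, eval_finsetSum, Finset.sum_eq_single_of_mem Q (Finset.mem_Icc.mpr ⟨hQ, le_rfl⟩)]
  · simp [hQ.ne']
  · intro i hi hne
    have : Q - i ≠ 0 := by simp at hi; omega
    simp [this]

theorem Fin.sum_ite_val_add_one_eq {M : Type*} [AddCommMonoid M] {Q : ℕ} (m : ℕ)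
    (f : Fin Q → M) :
    ∑ k : Fin Q, (if (k : ℕ) + 1 = m then f k else 0) =
      if h : 0 < m ∧ m ≤ Q then f ⟨m - 1, by omega⟩ else 0 := by
  split_ifs with h
  · rw [Finset.sum_eq_single_of_mem ⟨m - 1, by omega⟩ (Finset.mem_univ _)]
    · simp only [if_pos (by omega : m - 1 + 1 = m)]
    · intro k _ hk
      rw [if_neg fun hkm => hk (Fin.ext (by simp; omega))]
  · exact Finset.sum_eq_zero fun k _ => if_neg (by omega)

theorem compMat_apply (Q : ℕ) (A : ℕ → ℤ) (i k : Fin Q) :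
    compMat Q A i k = (if (k : ℕ) + 1 = Q then -A (Q - i) else 0)
      + (if (k : ℕ) + 1 = i then 1 else 0) := by
  unfold compMat
  split_ifs <;> simp <;> omega

/-- With `u = (A Q)⁻¹` this is the inverse of `compMat Q A`. -/
def compMatInv (Q : ℕ) (A : ℕ → ℤ) (u : ℤ) : Matrix (Fin Q) (Fin Q) ℤ :=
  Matrix.of fun i j =>
    if (j : ℕ) = 0 then -u * (if (i : ℕ) + 1 = Q then 1 else A (Q - 1 - (i : ℕ)))
    else if (i : ℕ) + 1 = (j : ℕ) then 1 else 0

theorem compMat_mul_compMatInv_apply (Q : ℕ) (P A : ℕ → ℤ) (u : ℤ) (i j : Fin Q) :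
    (compMat Q P * compMatInv Q A u) i j =
      if (j : ℕ) = 0 then
        (if (i : ℕ) = 0 then u * P Q else u * (P (Q - (i : ℕ)) - A (Q - (i : ℕ))))
      else (if i = j then 1 else 0) := by
  have hiQ := i.isLt
  have hQ : 0 < Q ∧ Q ≤ Q := ⟨by omega, le_rfl⟩
  have hQ1 : Q - 1 + 1 = Q := by omega
  simp only [mul_apply, compMat_apply, add_mul, ite_mul, zero_mul, one_mul,
    Finset.sum_add_distrib, Fin.sum_ite_val_add_one_eq, compMatInv, of_apply, Fin.ext_iff,
    dif_pos hQ, hQ1, if_true]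
  rcases eq_or_ne (j : ℕ) 0 with hj | hj
  · rcases eq_or_ne (i : ℕ) 0 with hi | hi
    · simp [hi, hj]
      ring
    · simp [hi, hj, show Q - 1 - ((i : ℕ) - 1) = Q - i by omega,
        show (i : ℕ) - 1 + 1 ≠ Q by omega, Nat.pos_of_ne_zero hi, hiQ.le]
      ring
  · split_ifs <;> omega

theorem compMat_mul_compMatInv_self (Q : ℕ) (A : ℕ → ℤ) {u : ℤ} (hu : u * A Q = 1) :
    compMat Q A * compMatInv Q A u = 1 := by
  ext i j
  rw [compMat_mul_compMatInv_apply, one_apply]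
  split_ifs <;> simp_all [Fin.ext_iff]

theorem h1_explicit_general
    (r Q : ℕ) (d : Fin r → ℕ)
    (hd : ∀ k, 0 < d k)
    (A B : ℕ → ℤ)
    (hA : ∏ k, ((X : ℤ[X]) ^ d k - 1)
      = X ^ Q + ∑ i ∈ Finset.Icc 1 Q, C (A i) * X ^ (Q - i)) :
    ∀ i j : Fin Q,
      (compMat Q B * (compMat Q A)⁻¹) i j =
        if (j : ℕ) = 0 then
          (if (i : ℕ) = 0 then (-1) ^ r * B Q
           else (-1) ^ r * (B (Q - (i : ℕ)) - A (Q - (i : ℕ))))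
        else (if i = j then 1 else 0) := by
  intro i j
  have hAQ : A Q = (-1) ^ r := by
    rw [← eval_zero_X_pow_add_sum i.pos A, ← hA, eval_zero_prod_X_pow_sub_one d hd,
      Fintype.card_fin]
  have hinv : (compMat Q A)⁻¹ = compMatInv Q A ((-1) ^ r) :=
    inv_eq_right_inv <| compMat_mul_compMatInv_self Q A <| by
      rw [hAQ, ← pow_add, Even.neg_one_pow ⟨r, rfl⟩]
  rw [hinv, compMat_mul_compMatInv_apply]

/-- Explicit form of `h₁ = h₀⁻¹ · h∞⁻¹`: its first column is
`((-1)^r B_Q, (-1)^r (B_{Q-1} - A_{Q-1}), …, (-1)^r (B_1 - A_1))ᵀ` and the remaining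
columns agree with those of the identity matrix.  Here `h∞ = compMat Q A` and
`h₀⁻¹ = compMat Q B`. -/
theorem h1_explicit
    (N r Q : ℕ) (q : Fin (N + 1) → ℕ) (d : Fin r → ℕ)
    (hq : ∀ ν, 0 < q ν) (hd : ∀ k, 0 < d k)
    (hQq : Q = ∑ ν, q ν) (hQd : Q = ∑ k, d k)
    (A B : ℕ → ℤ)
    (hA : ∏ k, ((X : ℤ[X]) ^ d k - 1)
      = X ^ Q + ∑ i ∈ Finset.Icc 1 Q, C (A i) * X ^ (Q - i))
    (hB : ∏ ν, ((X : ℤ[X]) ^ q ν - 1)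
      = X ^ Q + ∑ i ∈ Finset.Icc 1 Q, C (B i) * X ^ (Q - i)) :
    ∀ i j : Fin Q,
      (compMat Q B * (compMat Q A)⁻¹) i j =
        if (j : ℕ) = 0 then
          (if (i : ℕ) = 0 then (-1) ^ r * B Q
           else (-1) ^ r * (B (Q - (i : ℕ)) - A (Q - (i : ℕ))))
        else (if i = j then 1 else 0) :=
  h1_explicit_general r Q d hd A B hA
end

section
/- For every vector v = (v₁,…,v_Q)ᵀ ∈ ℂ^Q, the determinant of the Q×Q matrix T = (v, E₀·v, E₀²·v, …, E₀^{Q−1}·v) whose columns are the iterates of v under E₀ equals ε·∏_{1 ≤ α < β ≤ p} (e_α − e_β)^{μ_α·μ_β} · ∏_{α=1}^p (v_{σ_{α−1}+1})^{μ_α}, where ε ∈ {+1, −1} is a sign depending only on (μ₁,…,μ_p) and not on v or on e₁,…,e_p. -/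
/-!
Let `u` be the vector with a `1` at the first position of each block and `0` elsewhere, and `L`
the block-diagonal matrix whose blocks are lower-triangular Toeplitz matrices with first columns
the corresponding segments of `v`. Then `L` commutes with `E₀` and `L u = v`, so the Krylov matrix
of `v` is `L` times the Krylov matrix of `u`, and `det L = ∏_α v_{σ_α}^{μ_α}`.

Entry `(σ_α + k, j)` of the Krylov matrix of `u` is the `k`-th Taylor coefficient of `X ^ j` at
`e_α`: it is a confluent Vandermonde matrix. Trading the monomials `X ^ j` for the Newton
polynomials `∏_{l<j} (X - e_{blk l})` is a unitriangular change of basis and makes it lower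
triangular with diagonal entries `∏_{β<α} (e_α - e_β)^{μ_β}`. Reordering the differences
produces the sign `(-1)^{∑_{β<α} μ_α μ_β}`.
-/

open Matrix

/-- Partial sums `σ_a = μ_0 + ⋯ + μ_{a-1}` of the block sizes. -/
def sigmaSum (μ : ℕ → ℕ) (a : ℕ) : ℕ := ∑ b ∈ Finset.range a, μ b

/-- The index of the block containing position `i`: the largest `a ≤ p` with `σ_a ≤ i`. -/
def blkOf (p : ℕ) (μ : ℕ → ℕ) (i : ℕ) : ℕ :=
  Nat.findGreatest (fun a => sigmaSum μ a ≤ i) p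

/-- The block-diagonal matrix `E₀` whose `α`-th diagonal block is the
`μ_α × μ_α` Jordan-type block `e_α·id + J_{μ_α,-}` (ones on the subdiagonal). -/
def E0mat (Q p : ℕ) (μ : ℕ → ℕ) (e : ℕ → ℂ) : Matrix (Fin Q) (Fin Q) ℂ :=
  Matrix.of fun i j =>
    if i = j then e (blkOf p μ (i : ℕ))
    else if (i : ℕ) = (j : ℕ) + 1 ∧ blkOf p μ (i : ℕ) = blkOf p μ (j : ℕ) then 1
    else 0

open Polynomial Finset

section General

variable {R : Type*} [CommRing R]

theorem Polynomial.coeff_taylor_mul_X_sub_C_pow (r : R) (f : R[X]) (m k : ℕ) :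
    (taylor r (f * (X - C r) ^ m)).coeff k = if m ≤ k then (taylor r f).coeff (k - m) else 0 := by
  rw [taylor_mul, taylor_pow, map_sub, taylor_X, taylor_C, add_sub_cancel_right,
    coeff_mul_X_pow']

theorem Polynomial.coeff_taylor_X_pow_succ (r : R) (n k : ℕ) :
    (taylor r (X ^ (n + 1))).coeff k
      = r * (taylor r (X ^ n)).coeff k + if 0 < k then (taylor r (X ^ n)).coeff (k - 1) else 0 := by
  have h := coeff_mul_X_pow' (taylor r (X ^ n)) 1 k
  rw [pow_one] at h
  rw [pow_succ, taylor_mul, taylor_X, mul_add, coeff_add, coeff_mul_C, mul_comm _ r, h, add_comm]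
  simp only [Nat.one_le_iff_ne_zero, Nat.pos_iff_ne_zero]

theorem Matrix.det_of_apply_X_pow_eq_det_of_apply_monic {n : ℕ} (φ : Fin n → R[X] →ₗ[R] R)
    (P : Fin n → R[X]) (h_deg : ∀ j, (P j).natDegree = j) (h_monic : ∀ j, (P j).Monic) :
    (of fun i j : Fin n => φ i (X ^ (j : ℕ))).det = (of fun i j => φ i (P j)).det := by
  have h : (of fun i j => φ i (P j))
      = (of fun i j : Fin n => φ i (X ^ (j : ℕ))) * of fun i j : Fin n => (P j).coeff i := by
    ext i j
    rw [of_apply, as_sum_range' (P j) n (h_deg j ▸ j.isLt)]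
    simp only [map_sum, ← C_mul_X_pow_eq_monomial, ← smul_eq_C_mul, map_smul, smul_eq_mul,
      mul_apply, of_apply, ← Fin.sum_univ_eq_sum_range (fun m => (P j).coeff m * φ i (X ^ m))]
    exact Finset.sum_congr rfl fun _ _ => mul_comm _ _
  rw [h, det_mul, det_matrixOfPolynomials P h_deg h_monic, mul_one]

/-- Confluent Vandermonde determinant. In the Newton basis `∏_{l<j} (X - C (c l))` the matrix
becomes lower triangular. -/
theorem Matrix.det_of_coeff_taylor_X_pow [Nontrivial R] (n : ℕ) (c : ℕ → R) (K : ℕ → ℕ)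
    (hK : ∀ i, K i ≤ i) (hc : ∀ i l, i - K i ≤ l → l ≤ i → c l = c i) :
    (of fun i j : Fin n => (taylor (c i) (X ^ (j : ℕ))).coeff (K i)).det
      = ∏ i ∈ range n, ∏ l ∈ range (i - K i), (c i - c l) := by
  obtain ⟨B, hB⟩ : ∃ B : ℕ → R[X], ∀ j, B j = ∏ l ∈ range j, (X - C (c l)) :=
    ⟨_, fun _ => rfl⟩
  have B_monic (j : ℕ) : (B j).Monic := by
    rw [hB]; exact monic_prod_of_monic _ _ fun _ _ => monic_X_sub_C _
  have B_natDegree (j : ℕ) : (B j).natDegree = j := by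
    rw [hB, natDegree_prod_of_monic _ _ fun _ _ => monic_X_sub_C _]; simp [natDegree_X]
  have B_run (i m : ℕ) (hm : m ≤ K i + 1) :
      B (i - K i + m) = B (i - K i) * (X - C (c i)) ^ m := by
    rw [hB, hB, prod_range_add]
    congr 1
    have := hK i
    rw [prod_congr rfl fun x hx => by
      rw [hc i _ (by omega) (by have := mem_range.1 hx; omega)], prod_const, card_range]
  refine (det_of_apply_X_pow_eq_det_of_apply_monic
    (fun i => (lcoeff R (K i)).comp (taylor (c i))) (fun j => B j) (fun j => B_natDegree j)
    (fun j => B_monic j)).trans ?_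
  rw [det_of_isLowerTriangular]
  simp only [of_apply, LinearMap.coe_comp, Function.comp_apply, lcoeff_apply]
  rw [Fin.prod_univ_eq_prod_range (fun i => (taylor (c i) (B i)).coeff (K i))]
  · refine prod_congr rfl fun i _ => ?_
    have := B_run i (K i) (by omega)
    rw [Nat.sub_add_cancel (hK i)] at this
    rw [this, coeff_taylor_mul_X_sub_C_pow, if_pos le_rfl, Nat.sub_self, taylor_coeff_zero, hB,
      eval_prod]
    simp only [eval_sub, eval_X, eval_C]
  · intro i j hij
    have hij : (i : ℕ) < j := hij
    have hsplit : B j = B (i - K i) * (∏ l ∈ Ico ((i : ℕ) + 1) j, (X - C (c l)))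
        * (X - C (c i)) ^ (K i + 1) := by
      have := B_run i (K i + 1) le_rfl
      rw [show (i : ℕ) - K i + (K i + 1) = i + 1 by have := hK i; omega] at this
      rw [mul_right_comm, ← this, hB, hB, prod_range_mul_prod_Ico _ (by omega)]
    simp only [of_apply, LinearMap.coe_comp, Function.comp_apply, lcoeff_apply]
    rw [hsplit, coeff_taylor_mul_X_sub_C_pow, if_neg (by omega)]

theorem prod_pow_prod_sub_pow_eq_neg_one_pow_mul (e : ℕ → R) (μ : ℕ → ℕ) (p : ℕ) :
    ∏ β ∈ range p, (∏ α ∈ range β, (e β - e α) ^ μ α) ^ μ β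
      = (-1) ^ (∑ β ∈ range p, ∑ α ∈ range β, μ α * μ β)
        * ∏ β ∈ range p, ∏ α ∈ range β, (e α - e β) ^ (μ α * μ β) :=
  calc
    _ = ∏ β ∈ range p, ∏ α ∈ range β,
          ((-1) ^ (μ α * μ β) * (e α - e β) ^ (μ α * μ β)) := by
        refine prod_congr rfl fun β _ => ?_
        rw [← prod_pow]
        refine prod_congr rfl fun α _ => ?_
        rw [← pow_mul, ← mul_pow, neg_one_mul, neg_sub]
    _ = _ := by simp only [prod_mul_distrib, prod_pow_eq_pow_sum]

theorem Fin.sum_univ_ite_val_eq {M : Type*} [AddCommMonoid M] (Q k : ℕ) (x : M) :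
    ∑ m : Fin Q, (if (m : ℕ) = k then x else 0) = if k < Q then x else 0 := by
  simp only [Fin.sum_univ_eq_sum_range (fun m => if m = k then x else 0), sum_ite_eq', mem_range]

end General

section Krylov

variable {R n : Type*} [Semiring R] [Fintype n] [DecidableEq n]

def krylovMatrix (A : Matrix n n R) (w : n → R) (m : ℕ) : Matrix n (Fin m) R :=
  of fun i j => (A ^ (j : ℕ) *ᵥ w) i

theorem krylovMatrix_mulVec_of_commute {A L : Matrix n n R} (h : Commute A L) (w : n → R)
    (m : ℕ) : krylovMatrix A (L *ᵥ w) m = L * krylovMatrix A w m := by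
  ext i j
  rw [krylovMatrix, of_apply, mulVec_mulVec, ((h.pow_left j).eq), ← mulVec_mulVec]
  rfl

end Krylov

section Blocks

variable {p : ℕ} {μ : ℕ → ℕ}

def blockStart (p : ℕ) (μ : ℕ → ℕ) (i : ℕ) : ℕ := sigmaSum μ (blkOf p μ i)

theorem blkOf_le (i : ℕ) : blkOf p μ i ≤ p := Nat.findGreatest_le p

theorem blockStart_le (i : ℕ) : blockStart p μ i ≤ i :=
  Nat.findGreatest_spec (P := fun a => sigmaSum μ a ≤ i) (Nat.zero_le p) (by simp [sigmaSum])

theorem blkOf_eq_of_blockStart_le {i l : ℕ} (h₁ : blockStart p μ i ≤ l) (h₂ : l ≤ i) :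
    blkOf p μ l = blkOf p μ i := by
  refine le_antisymm ?_ (Nat.le_findGreatest (blkOf_le i) h₁)
  by_contra! h
  exact Nat.findGreatest_is_greatest (P := fun a => sigmaSum μ a ≤ i) h (blkOf_le l)
    ((blockStart_le l).trans h₂)

theorem blockStart_eq_of_blockStart_le {i l : ℕ} (h₁ : blockStart p μ i ≤ l)
    (h₂ : l ≤ i) :
    blockStart p μ l = blockStart p μ i := by
  rw [blockStart, blkOf_eq_of_blockStart_le h₁ h₂, blockStart]

theorem blkOf_eq_of_sigmaSum_le_of_lt {a l : ℕ} (ha : a ≤ p) (h₁ : sigmaSum μ a ≤ l)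
    (h₂ : l < sigmaSum μ (a + 1)) : blkOf p μ l = a := by
  refine le_antisymm ?_ (Nat.le_findGreatest ha h₁)
  by_contra! h
  have hmono : sigmaSum μ (a + 1) ≤ sigmaSum μ (blkOf p μ l) :=
    sum_le_sum_of_subset (range_subset_range.2 h)
  have := blockStart_le (p := p) (μ := μ) l
  rw [blockStart] at this
  omega

theorem prod_range_sigmaSum_blkOf {M : Type*} [CommMonoid M] (F : ℕ → M) {a : ℕ}
    (ha : a ≤ p) :
    ∏ l ∈ range (sigmaSum μ a), F (blkOf p μ l) = ∏ b ∈ range a, F b ^ μ b := by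
  induction a with
  | zero => simp [sigmaSum]
  | succ a ih =>
    have hσ : sigmaSum μ (a + 1) = sigmaSum μ a + μ a := sum_range_succ _ _
    rw [hσ, prod_range_add, ih (by omega), prod_range_succ]
    congr 1
    rw [prod_congr rfl fun x hx => by
      rw [blkOf_eq_of_sigmaSum_le_of_lt (a := a) (by omega) (by omega)
        (by have := mem_range.1 hx; omega)],
      prod_const, card_range]

variable {Q : ℕ} (e : ℕ → ℂ)

theorem E0mat_apply (i j : Fin Q) :
    E0mat Q p μ e i j = if (j : ℕ) = i then e (blkOf p μ i)
      else if (j : ℕ) + 1 = i ∧ blockStart p μ i < i then 1 else 0 := by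
  rcases eq_or_ne j i with rfl | hji
  · simp [E0mat]
  have hsub : (i : ℕ) = j + 1 ∧ blkOf p μ i = blkOf p μ j
      ↔ (j : ℕ) + 1 = i ∧ blockStart p μ i < i := by
    constructor
    · rintro ⟨hij, hblk⟩
      have := blockStart_le (p := p) (μ := μ) j
      rw [blockStart, ← hblk] at this
      exact ⟨hij.symm, by rw [blockStart]; omega⟩
    · rintro ⟨hij, hs⟩
      exact ⟨hij.symm, (blkOf_eq_of_blockStart_le (by omega) (by omega)).symm⟩
  simp only [E0mat, of_apply, if_neg hji.symm, if_neg (Fin.val_ne_of_ne hji), hsub]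

theorem E0mat_mulVec (f : ℕ → ℂ) (i : Fin Q) :
    (E0mat Q p μ e *ᵥ fun k : Fin Q => f k) i
      = e (blkOf p μ i) * f i + if blockStart p μ i < i then f (i - 1) else 0 := by
  have hterm (m : Fin Q) : E0mat Q p μ e i m * f m
      = (if (m : ℕ) = i then e (blkOf p μ i) * f i else 0)
        + if (m : ℕ) = i - 1 then (if blockStart p μ i < i then f (i - 1) else 0) else 0 := by
    rw [E0mat_apply]
    obtain hm | hm | ⟨hm₁, hm₂⟩ :
        (m : ℕ) = i ∨ (m : ℕ) + 1 = i ∨ ((m : ℕ) ≠ i ∧ (m : ℕ) + 1 ≠ i) := by omega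
    · simp only [hm, ↓reduceIte, left_eq_add, ite_eq_right_iff]
      omega
    · simp [← hm]
    · simp [hm₁, hm₂, show (m : ℕ) ≠ i - 1 by omega]
  simp only [mulVec, dotProduct, hterm, sum_add_distrib, Fin.sum_univ_ite_val_eq, if_pos i.isLt,
    if_pos (show (i : ℕ) - 1 < Q by omega)]

theorem vecMul_E0mat (f : ℕ → ℂ) (l : Fin Q) :
    ((fun k : Fin Q => f k) ᵥ* E0mat Q p μ e) l
      = e (blkOf p μ l) * f l
        + if (l : ℕ) + 1 < Q ∧ blockStart p μ (l + 1) ≤ l then f (l + 1) else 0 := by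
  have hterm (m : Fin Q) : f m * E0mat Q p μ e m l
      = (if (m : ℕ) = l then e (blkOf p μ l) * f l else 0)
        + if (m : ℕ) = l + 1 then (if blockStart p μ (l + 1) ≤ l then f (l + 1) else 0)
          else 0 := by
    rw [E0mat_apply]
    obtain hm | hm | ⟨hm₁, hm₂⟩ :
        (m : ℕ) = l ∨ (m : ℕ) = l + 1 ∨ ((m : ℕ) ≠ l ∧ (m : ℕ) ≠ l + 1) := by omega
    · simp [hm, mul_comm]
    · simp [hm]
    · simp [hm₁, hm₂, Ne.symm hm₁, Ne.symm hm₂]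
  simp only [vecMul, dotProduct, hterm, sum_add_distrib, Fin.sum_univ_ite_val_eq, if_pos l.isLt,
    ite_and]

def blockToeplitzEntry (p : ℕ) (μ : ℕ → ℕ) (v : ℕ → ℂ) (i l : ℕ) : ℂ :=
  if blockStart p μ i ≤ l ∧ l ≤ i then v (blockStart p μ i + (i - l)) else 0

def blockToeplitz (Q p : ℕ) (μ : ℕ → ℕ) (v : ℕ → ℂ) : Matrix (Fin Q) (Fin Q) ℂ :=
  of fun i l => blockToeplitzEntry p μ v i l

theorem commute_E0mat_blockToeplitz (v : ℕ → ℂ) :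
    Commute (E0mat Q p μ e) (blockToeplitz Q p μ v) := by
  ext i l
  change (E0mat Q p μ e *ᵥ fun k : Fin Q => blockToeplitzEntry p μ v k l) i
    = ((fun k : Fin Q => blockToeplitzEntry p μ v i k) ᵥ* E0mat Q p μ e) l
  rw [E0mat_mulVec e (fun k => blockToeplitzEntry p μ v k l),
    vecMul_E0mat e (blockToeplitzEntry p μ v i)]
  have hi := blockStart_le (p := p) (μ := μ) i
  congr 1
  · unfold blockToeplitzEntry
    split_ifs with h
    · rw [blkOf_eq_of_blockStart_le h.1 h.2]
    · simp only [mul_zero]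
  · -- both sides equal `v (blockStart i + (i - 1 - l))` if `blockStart i ≤ l < i`, else `0`
    by_cases hs : blockStart p μ i ≤ l ∧ (l : ℕ) < i
    · have h₁ : blockStart p μ (i - 1) = blockStart p μ i :=
        blockStart_eq_of_blockStart_le (by omega) (by omega)
      have h₂ : blockStart p μ (l + 1) = blockStart p μ i :=
        blockStart_eq_of_blockStart_le (by omega) (by omega)
      simp only [blockToeplitzEntry, h₁, h₂]
      rw [if_pos (by omega), if_pos (by omega), if_pos (by omega), if_pos (by omega)]
      congr 2
      omega
    · have h₁ (h : blockStart p μ i < i) : blockStart p μ (i - 1) = blockStart p μ i :=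
        blockStart_eq_of_blockStart_le (by omega) (by omega)
      have h₂ : blockStart p μ (blockStart p μ i) = blockStart p μ i :=
        blockStart_eq_of_blockStart_le le_rfl hi
      simp only [blockToeplitzEntry]
      rw [ite_eq_right_iff.2 fun h => ite_eq_right_iff.2 fun h' =>
          absurd h' (by rw [h₁ h]; omega),
        ite_eq_right_iff.2 fun h => ite_eq_right_iff.2 fun h' => absurd h.2 ?_]
      have hl : (l : ℕ) + 1 = blockStart p μ i := by omega
      rw [hl, h₂]
      omega

def blockStartIndicator (p : ℕ) (μ : ℕ → ℕ) (l : ℕ) : ℂ :=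
  if blockStart p μ l = l then 1 else 0

theorem blockToeplitz_mulVec_blockStartIndicator (v : ℕ → ℂ) :
    blockToeplitz Q p μ v *ᵥ (fun k : Fin Q => blockStartIndicator p μ k)
      = fun k : Fin Q => v k := by
  funext i
  have hi := blockStart_le (p := p) (μ := μ) i
  have hterm (l : Fin Q) : blockToeplitzEntry p μ v i l * blockStartIndicator p μ l
      = if (l : ℕ) = blockStart p μ i then v i else 0 := by
    unfold blockToeplitzEntry blockStartIndicator
    by_cases h : blockStart p μ i ≤ l ∧ (l : ℕ) ≤ i
    · rw [if_pos h, blockStart_eq_of_blockStart_le h.1 h.2]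
      by_cases hl : (l : ℕ) = blockStart p μ i
      · rw [if_pos hl.symm, if_pos hl, mul_one, hl, Nat.add_sub_cancel' hi]
      · rw [if_neg (Ne.symm hl), if_neg hl, mul_zero]
    · rw [if_neg h, zero_mul, if_neg (by omega)]
  change ∑ l : Fin Q, blockToeplitzEntry p μ v i l * blockStartIndicator p μ l = v i
  simp only [hterm, Fin.sum_univ_ite_val_eq, if_pos (lt_of_le_of_lt hi i.isLt)]

theorem krylovMatrix_E0mat_blockStartIndicator :
    krylovMatrix (E0mat Q p μ e) (fun k : Fin Q => blockStartIndicator p μ k) Q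
      = of fun i j : Fin Q =>
          (taylor (e (blkOf p μ i)) (X ^ (j : ℕ))).coeff (i - blockStart p μ i) := by
  suffices h : ∀ n, E0mat Q p μ e ^ n *ᵥ (fun k : Fin Q => blockStartIndicator p μ k)
      = fun k : Fin Q => (taylor (e (blkOf p μ k)) (X ^ n)).coeff (k - blockStart p μ k) by
    ext i j
    exact congrFun (h j) i
  intro n
  induction n with
  | zero =>
    funext k
    have hk := blockStart_le (p := p) (μ := μ) k
    rw [pow_zero, one_mulVec, pow_zero, taylor_one, coeff_C, blockStartIndicator]
    exact if_congr (by omega) rfl rfl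
  | succ n ih =>
    rw [pow_succ', ← mulVec_mulVec, ih]
    funext k
    rw [E0mat_mulVec e
      (fun m => (taylor (e (blkOf p μ m)) (X ^ n)).coeff (m - blockStart p μ m)),
      coeff_taylor_X_pow_succ]
    congr 1
    by_cases h : blockStart p μ k < k
    · have h₁ : blockStart p μ (k - 1) = blockStart p μ k :=
        blockStart_eq_of_blockStart_le (by omega) (by omega)
      have h₂ : blkOf p μ (k - 1) = blkOf p μ k :=
        blkOf_eq_of_blockStart_le (by omega) (by omega)
      rw [if_pos h, if_pos (by omega), h₁, h₂, Nat.sub_right_comm]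
    · rw [if_neg h, if_neg (by omega)]

theorem det_blockToeplitz (hQ : sigmaSum μ p = Q) (v : ℕ → ℂ) :
    (blockToeplitz Q p μ v).det = ∏ α ∈ range p, v (sigmaSum μ α) ^ μ α := by
  rw [det_of_isLowerTriangular]
  · simp only [blockToeplitz, of_apply, blockToeplitzEntry, le_refl, and_true, blockStart_le,
      if_true, Nat.sub_self, add_zero]
    rw [Fin.prod_univ_eq_prod_range (fun i => v (blockStart p μ i)), ← hQ]
    exact prod_range_sigmaSum_blkOf (fun b => v (sigmaSum μ b)) le_rfl
  · intro i l hil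
    have hil : (i : ℕ) < l := hil
    simp only [blockToeplitz, of_apply, blockToeplitzEntry]
    rw [if_neg (by omega)]

theorem det_coeff_taylor_blkOf (hQ : sigmaSum μ p = Q) :
    (of fun i j : Fin Q =>
        (taylor (e (blkOf p μ i)) (X ^ (j : ℕ))).coeff (i - blockStart p μ i)).det
      = ∏ α ∈ range p, (∏ b ∈ range α, (e α - e b) ^ μ b) ^ μ α := by
  refine (det_of_coeff_taylor_X_pow Q (fun l => e (blkOf p μ l)) (fun l => l - blockStart p μ l)
    (fun l => Nat.sub_le _ _) fun i l h₁ h₂ => ?_).trans ?_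
  · rw [blkOf_eq_of_blockStart_le (by have := blockStart_le (p := p) (μ := μ) i; omega) h₂]
  · have hrun (i : ℕ) : i - (i - blockStart p μ i) = sigmaSum μ (blkOf p μ i) :=
      Nat.sub_sub_self (blockStart_le i)
    simp only [hrun]
    rw [prod_congr rfl fun i _ => prod_range_sigmaSum_blkOf (fun b => e (blkOf p μ i) - e b)
      (blkOf_le i), ← hQ]
    exact prod_range_sigmaSum_blkOf (fun α => ∏ b ∈ range α, (e α - e b) ^ μ b) le_rfl

end Blocks

theorem det_iterates_formula_general
    (p Q : ℕ) (μ : ℕ → ℕ)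
    (hQ : Q = ∑ α ∈ Finset.range p, μ α) :
    ∃ ε : ℂ, (ε = 1 ∨ ε = -1) ∧
      ∀ (e : ℕ → ℂ) (v : ℕ → ℂ),
        (Matrix.of fun i j : Fin Q =>
            ((E0mat Q p μ e ^ (j : ℕ)) *ᵥ fun k : Fin Q => v (k : ℕ)) i).det
          = ε * (∏ β ∈ Finset.range p, ∏ α ∈ Finset.range β,
                  (e α - e β) ^ (μ α * μ β))
              * ∏ α ∈ Finset.range p, (v (sigmaSum μ α)) ^ (μ α) := by
  refine ⟨(-1) ^ (∑ β ∈ range p, ∑ α ∈ range β, μ α * μ β), neg_one_pow_eq_or ℂ _,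
    fun e v => ?_⟩
  have hσ : sigmaSum μ p = Q := hQ.symm
  change (krylovMatrix (E0mat Q p μ e) (fun k : Fin Q => v k) Q).det = _
  rw [← blockToeplitz_mulVec_blockStartIndicator,
    krylovMatrix_mulVec_of_commute (commute_E0mat_blockToeplitz e v), det_mul,
    krylovMatrix_E0mat_blockStartIndicator, det_blockToeplitz hσ, det_coeff_taylor_blkOf e hσ,
    prod_pow_prod_sub_pow_eq_neg_one_pow_mul]
  ring

/-- The determinant of the matrix with columns `v, E₀v, …, E₀^{Q-1}v` equals
`ε·∏_{α<β} (e_α - e_β)^{μ_α μ_β}·∏_α v_{σ_{α-1}+1}^{μ_α}` for a sign `ε` depending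
only on `(μ_1, …, μ_p)`. -/
theorem det_iterates_formula
    (p Q : ℕ) (hp : 1 ≤ p) (μ : ℕ → ℕ) (hμ : ∀ α < p, 0 < μ α)
    (hQ : Q = ∑ α ∈ Finset.range p, μ α) :
    ∃ ε : ℂ, (ε = 1 ∨ ε = -1) ∧
      ∀ (e : ℕ → ℂ) (v : ℕ → ℂ),
        (Matrix.of fun i j : Fin Q =>
            ((E0mat Q p μ e ^ (j : ℕ)) *ᵥ fun k : Fin Q => v (k : ℕ)) i).det
          = ε * (∏ β ∈ Finset.range p, ∏ α ∈ Finset.range β,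
                  (e α - e β) ^ (μ α * μ β))
              * ∏ α ∈ Finset.range p, (v (sigmaSum μ α)) ^ (μ α) :=
  det_iterates_formula_general p Q μ hQ
end
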